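/- arXiv:1511.05456 — 5 statements merged into one kernel-verified Lean document; each statement's English description precedes it below -/
import Mathlib

section
/- For n ≥ 2 and 1 ≤ i ≤ n-1, the number of permutations π of [n] such that i is an ascent and i+1 is a descent equals (i-1)(n-2)! + (n-i)(n-2)! + (n-i)(i-1)(n-2)!. -/
open Finset

/-- The word of a permutation of `[n]` in one-line notation (positions `0,…,n-1`
give values `1,…,n`), with the convention that position `n` carries the value `n+1`. -/
def pval (n : ℕ) (π : Equiv.Perm (Fin n)) (t : ℕ) : ℕ :=
  if h : t < n then (π ⟨t, h⟩ : ℕ) + 1 else n + 1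

/-- The value `i` is an ascent of `π`. -/
def IsValAscent (n : ℕ) (π : Equiv.Perm (Fin n)) (i : ℕ) : Prop :=
  ∃ t < n, pval n π t = i ∧ pval n π t < pval n π (t + 1)

/-- The value `i` is a descent of `π`. -/
def IsValDescent (n : ℕ) (π : Equiv.Perm (Fin n)) (i : ℕ) : Prop :=
  ∃ t < n, pval n π t = i ∧ pval n π t > pval n π (t + 1)

/-!
Write `π` as the word `π₁ ⋯ πₙ (n+1)` and let `σ a` be the letter following `a` in it
(`List.nextOr a (n + 1)` of the one-line word). Then `i` is an ascent and `i + 1` a descent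
exactly when `σ i = b` and `σ (i + 1) = d` for a pair with `i < b ≤ n + 1` and `1 ≤ d ≤ i`,
where `(b, d) = (i + 1, i)` is impossible because a word has no 2-cycle. For each of the
remaining `(n + 1 - i) i - 1` pairs there are exactly `(n - 2)!` words: deleting a letter `a`
with prescribed successor `σ a` is a bijection onto the words without `a`, inverted by
reinserting `a` just before `σ a`, and deleting `i` and `i + 1` leaves arbitrary words in the
other `n - 2` letters.
-/

open Nat

namespace List

variable {α : Type*}

theorem insertIdx_length_append (A C : List α) (v : α) :
    (A ++ C).insertIdx A.length v = A ++ v :: C := by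
  induction A <;> simp_all [insertIdx_succ_cons]

variable [DecidableEq α]

theorem nextOr_cons_self (x : α) (l : List α) (d : α) : (x :: l).nextOr x d = l.headD d := by
  cases l <;> simp [nextOr_singleton, nextOr_self_cons_cons]

theorem nextOr_eq_getD (l : List α) (a d : α) : l.nextOr a d = l.getD (l.idxOf a + 1) d := by
  induction l with
  | nil => simp
  | cons b l ih =>
    by_cases h : a = b
    · subst h
      cases l <;> simp [nextOr_cons_self]
    · rw [nextOr_cons_of_ne _ _ _ _ h, idxOf_cons_ne _ (Ne.symm h), ih, getD_cons_succ]

theorem nextOr_mem_or_eq (l : List α) (a d : α) : l.nextOr a d ∈ l ∨ l.nextOr a d = d := by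
  rw [nextOr_eq_getD, getD_eq_getElem?_getD]
  cases h : l[l.idxOf a + 1]? with
  | none => exact .inr rfl
  | some b => exact .inl (mem_of_getElem? h)

theorem nextOr_append_cons {A : List α} {v : α} (hv : v ∉ A) (C : List α) (d : α) :
    (A ++ v :: C).nextOr v d = C.headD d := by
  induction A with
  | nil => exact nextOr_cons_self v C d
  | cons b A ih =>
    rw [mem_cons, not_or] at hv
    rw [cons_append, nextOr_cons_of_ne _ _ _ _ hv.1, ih hv.2]

theorem Nodup.idxOf_nextOr {l : List α} (hl : l.Nodup) {a d : α} (h : l.nextOr a d ≠ d) :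
    l.idxOf (l.nextOr a d) = l.idxOf a + 1 := by
  rw [nextOr_eq_getD] at h ⊢
  have hlt : l.idxOf a + 1 < l.length := by
    by_contra! hge
    exact h (getD_eq_default _ _ hge)
  rw [getD_eq_getElem _ _ hlt, hl.idxOf_getElem]

theorem Nodup.nextOr_nextOr_ne {l : List α} (hl : l.Nodup) {a d : α} (h₁ : l.nextOr a d ≠ d)
    (h₂ : l.nextOr (l.nextOr a d) d ≠ d) : l.nextOr (l.nextOr a d) d ≠ a := by
  intro h
  have := hl.idxOf_nextOr h₂
  rw [h, hl.idxOf_nextOr h₁] at this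
  omega

theorem Nodup.nextOr_erase {l : List α} (hl : l.Nodup) {a v d : α} (hav : a ≠ v) (hvd : v ≠ d) :
    (l.erase v).nextOr a d = if l.nextOr a d = v then l.nextOr v d else l.nextOr a d := by
  induction l with
  | nil => simp [Ne.symm hvd]
  | cons b l ih =>
    rw [nodup_cons] at hl
    by_cases hbv : b = v
    · subst hbv
      have : l.nextOr a d ≠ b := fun h => (nextOr_mem_or_eq l a d).elim
        (fun hm => hl.1 (h ▸ hm)) (fun hd => hvd (h ▸ hd))
      simp [nextOr_cons_of_ne _ _ _ _ hav, this]
    · rw [erase_cons_tail (by simpa using hbv), nextOr_cons_of_ne _ _ _ _ (Ne.symm hbv)]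
      by_cases hab : a = b
      · subst hab
        rw [nextOr_cons_self, nextOr_cons_self]
        rcases l with _ | ⟨c, l⟩
        · simp [Ne.symm hvd]
        · by_cases hcv : c = v
          · subst hcv; simp [nextOr_cons_self]
          · simp [hcv]
      · rw [nextOr_cons_of_ne _ _ _ _ hab, nextOr_cons_of_ne _ _ _ _ hab, ih hl.2]

theorem Nodup.exists_getD_eq_and_iff {l : List α} (hl : l.Nodup) (d v : α) (r : α → α → Prop) :
    (∃ t < l.length, l.getD t d = v ∧ r (l.getD t d) (l.getD (t + 1) d)) ↔
      v ∈ l ∧ r v (l.nextOr v d) := by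
  constructor
  · rintro ⟨t, ht, rfl, hr⟩
    rw [getD_eq_getElem _ _ ht] at hr ⊢
    exact ⟨getElem_mem ht, by rwa [nextOr_eq_getD, hl.idxOf_getElem]⟩
  · rintro ⟨hv, hr⟩
    have ht := idxOf_lt_length_iff.2 hv
    refine ⟨l.idxOf v, ht, ?_, ?_⟩ <;>
      rw [getD_eq_getElem _ _ ht, getElem_idxOf ht]
    rwa [← nextOr_eq_getD]

theorem erase_insertIdx_of_notMem {M : List α} {v : α} (hv : v ∉ M) (k : ℕ) :
    (M.insertIdx k v).erase v = M := by
  induction M generalizing k with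
  | nil => cases k <;> simp
  | cons b M ih =>
    rw [mem_cons, not_or] at hv
    cases k with
    | zero => simp
    | succ k => rw [insertIdx_succ_cons, erase_cons_tail (by simpa using Ne.symm hv.1), ih hv.2]

theorem nextOr_insertIdx_idxOf {M : List α} {v x d : α} (hv : v ∉ M) (hx : x ∈ M ∨ x = d) :
    (M.insertIdx (M.idxOf x) v).nextOr v d = x := by
  have hins : M.insertIdx (M.idxOf x) v = M.take (M.idxOf x) ++ v :: M.drop (M.idxOf x) := by
    have hk : (M.take (M.idxOf x)).length = M.idxOf x := length_take_of_le idxOf_le_length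
    calc M.insertIdx (M.idxOf x) v
        = (M.take (M.idxOf x) ++ M.drop (M.idxOf x)).insertIdx (M.take (M.idxOf x)).length v := by
          rw [take_append_drop, hk]
      _ = _ := insertIdx_length_append _ _ v
  rw [hins, nextOr_append_cons (fun h => hv (mem_of_mem_take h)), headD_eq_head?_getD, head?_drop]
  rcases hx with hx | rfl
  · rw [getElem?_idxOf hx]; rfl
  · by_cases hxM : x ∈ M
    · rw [getElem?_idxOf hxM]; rfl
    · rw [idxOf_of_notMem hxM, getElem?_eq_none le_rfl]; rfl

theorem Nodup.insertIdx_idxOf_nextOr_erase {l : List α} (hl : l.Nodup) {v d : α} (hv : v ∈ l)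
    (hd : d ∉ l) : (l.erase v).insertIdx ((l.erase v).idxOf (l.nextOr v d)) v = l := by
  obtain ⟨A, C, rfl⟩ := append_of_mem hv
  have hvA : v ∉ A := fun h => disjoint_of_nodup_append hl h mem_cons_self
  have hxA : C.headD d ∉ A := by
    cases C with
    | nil => exact fun h => hd (mem_append_left _ h)
    | cons c C => exact fun h => disjoint_of_nodup_append hl h (mem_cons_of_mem _ mem_cons_self)
  have hidx : C.idxOf (C.headD d) = 0 := by cases C <;> simp
  rw [nextOr_append_cons hvA, erase_append_right _ hvA, erase_cons_head,
    idxOf_append_of_notMem hxA, hidx, Nat.add_zero, insertIdx_length_append]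

end List

namespace Finset

variable {α : Type*} [DecidableEq α]

noncomputable def orderings (S : Finset α) : Finset (List α) := S.toList.permutations.toFinset

theorem mem_orderings {S : Finset α} {L : List α} :
    L ∈ S.orderings ↔ L.Nodup ∧ ∀ a, a ∈ L ↔ a ∈ S := by
  rw [orderings, List.mem_toFinset, List.mem_permutations]
  constructor
  · intro h
    exact ⟨h.nodup_iff.2 S.nodup_toList, fun a => by rw [h.mem_iff, mem_toList]⟩
  · rintro ⟨hL, hmem⟩
    exact (List.perm_ext_iff_of_nodup hL S.nodup_toList).2 fun a => by rw [hmem, mem_toList]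

theorem card_orderings (S : Finset α) : #S.orderings = (#S)! := by
  rw [orderings, List.toFinset_card_of_nodup (List.nodup_permutations _ S.nodup_toList),
    List.length_permutations, length_toList]

theorem card_filter_orderings_nextOr_eq {T : Finset α} {v z x : α} (hv : v ∈ T) (hz : z ∉ T)
    (hx : x ∈ insert z (T.erase v)) (P : List α → Prop) [DecidablePred P] :
    #{L ∈ T.orderings | L.nextOr v z = x ∧ P (L.erase v)} = #{M ∈ (T.erase v).orderings | P M} := by
  -- for `x = z` the index `M.idxOf x` is `M.length`, so `v` is appended at the end
  refine card_bij' (fun L _ => L.erase v) (fun M _ => M.insertIdx (M.idxOf x) v) ?_ ?_ ?_ ?_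
  · simp only [mem_filter, mem_orderings]
    rintro L ⟨⟨hL, hmem⟩, -, hP⟩
    exact ⟨⟨hL.erase v, fun a => by rw [hL.mem_erase_iff, mem_erase, hmem]⟩, hP⟩
  · simp only [mem_filter, mem_orderings]
    rintro M ⟨⟨hM, hmem⟩, hP⟩
    have hvM : v ∉ M := fun h => by simpa using (hmem v).1 h
    have hperm := List.perm_insertIdx v M (List.idxOf_le_length (a := x))
    refine ⟨⟨hperm.nodup_iff.2 (List.nodup_cons.2 ⟨hvM, hM⟩), fun a => ?_⟩, ?_, ?_⟩
    · rw [hperm.mem_iff, List.mem_cons, hmem, mem_erase]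
      by_cases h : a = v <;> simp [h, hv]
    · refine List.nextOr_insertIdx_idxOf hvM ?_
      rw [mem_insert, ← hmem] at hx
      exact hx.symm
    · rwa [List.erase_insertIdx_of_notMem hvM]
  · simp only [mem_filter, mem_orderings]
    rintro L ⟨⟨hL, hmem⟩, rfl, -⟩
    exact hL.insertIdx_idxOf_nextOr_erase ((hmem v).2 hv) (fun h => hz ((hmem z).1 h))
  · intro M hM
    simp only [mem_filter, mem_orderings] at hM
    exact List.erase_insertIdx_of_notMem (fun h => by simpa using (hM.1.2 v).1 h) _

theorem card_filter_orderings_nextOr_eq_and_nextOr_eq {S : Finset α} {z a₁ a₂ b₁ b₂ : α}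
    (hz : z ∉ S) (ha₁ : a₁ ∈ S) (ha₂ : a₂ ∈ S) (hb₁ : b₁ ∈ insert z S) (hb₂ : b₂ ∈ insert z S)
    (ha : a₁ ≠ a₂) (hb : b₁ ≠ b₂) (h₁ : b₁ ≠ a₁) (h₂ : b₂ ≠ a₂) (h₂₁ : b₂ ≠ a₁) :
    #{L ∈ S.orderings | L.nextOr a₁ z = b₁ ∧ L.nextOr a₂ z = b₂} = (#S - 2)! := by
  have ha₂' : a₂ ∈ S.erase a₁ := mem_erase.2 ⟨ha.symm, ha₂⟩
  calc #{L ∈ S.orderings | L.nextOr a₁ z = b₁ ∧ L.nextOr a₂ z = b₂}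
      = #{L ∈ S.orderings | L.nextOr a₁ z = b₁ ∧ (L.erase a₁).nextOr a₂ z = b₂} := by
        refine congrArg card (filter_congr fun L hL => and_congr_right fun hL₁ => ?_)
        rw [(mem_orderings.1 hL).1.nextOr_erase ha.symm (ne_of_mem_of_not_mem ha₁ hz)]
        split_ifs with h
        · simp [hL₁, h, hb, Ne.symm h₂₁]
        · rfl
    _ = #{M ∈ (S.erase a₁).orderings | M.nextOr a₂ z = b₂ ∧ True} := by
        rw [card_filter_orderings_nextOr_eq ha₁ hz (by simp_all) (·.nextOr a₂ z = b₂)]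
        simp
    _ = #((S.erase a₁).erase a₂).orderings := by
        rw [card_filter_orderings_nextOr_eq ha₂' (fun h => hz (mem_of_mem_erase h))
          (by simp_all) fun _ => True, filter_true]
    _ = (#S - 2)! := by
        rw [card_orderings, card_erase_of_mem ha₂', card_erase_of_mem ha₁]
        rfl

end Finset

section OneLine

variable {n : ℕ}

def oneLine (π : Equiv.Perm (Fin n)) : List ℕ := List.ofFn fun t => (π t : ℕ) + 1

theorem length_oneLine (π : Equiv.Perm (Fin n)) : (oneLine π).length = n := List.length_ofFn

theorem pval_eq_getD (π : Equiv.Perm (Fin n)) (t : ℕ) :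
    pval n π t = (oneLine π).getD t (n + 1) := by
  rw [pval, List.getD_eq_getElem?_getD]
  split_ifs with ht <;> simp [oneLine, ht]

theorem oneLine_injective : Function.Injective (oneLine (n := n)) := fun π σ h =>
  Equiv.ext fun t => Fin.ext (by simpa [oneLine] using congrFun (List.ofFn_injective h) t)

theorem oneLine_mem_orderings (π : Equiv.Perm (Fin n)) : oneLine π ∈ (Icc 1 n).orderings := by
  refine mem_orderings.2 ⟨List.nodup_ofFn.2 fun s t h => π.injective (Fin.ext (by simpa using h)),
    fun a => ⟨?_, fun ha => ?_⟩⟩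
  · rw [oneLine, List.mem_ofFn]
    rintro ⟨t, rfl⟩
    simp [(π t).isLt]
  · rw [mem_Icc] at ha
    exact List.mem_ofFn.2 ⟨π.symm ⟨a - 1, by omega⟩, by simp only [Equiv.apply_symm_apply]; omega⟩

theorem image_oneLine : univ.image (oneLine (n := n)) = (Icc 1 n).orderings := by
  refine eq_of_subset_of_card_le (image_subset_iff.2 fun π _ => oneLine_mem_orderings π) ?_
  rw [card_orderings, card_image_of_injective _ oneLine_injective, Finset.card_univ,
    Fintype.card_perm, Fintype.card_fin, Nat.card_Icc, Nat.add_sub_cancel]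

theorem card_filter_oneLine (Q : List ℕ → Prop) [DecidablePred Q] :
    #{π : Equiv.Perm (Fin n) | Q (oneLine π)} = #{W ∈ (Icc 1 n).orderings | Q W} := by
  rw [← image_oneLine, filter_image, card_image_of_injective _ oneLine_injective]

theorem isValAscent_iff (π : Equiv.Perm (Fin n)) (v : ℕ) :
    IsValAscent n π v ↔ v ∈ oneLine π ∧ v < (oneLine π).nextOr v (n + 1) := by
  have := (mem_orderings.1 (oneLine_mem_orderings π)).1.exists_getD_eq_and_iff (n + 1) v (· < ·)
  simpa only [IsValAscent, pval_eq_getD, length_oneLine] using this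

theorem isValDescent_iff (π : Equiv.Perm (Fin n)) (v : ℕ) :
    IsValDescent n π v ↔ v ∈ oneLine π ∧ (oneLine π).nextOr v (n + 1) < v := by
  have := (mem_orderings.1 (oneLine_mem_orderings π)).1.exists_getD_eq_and_iff (n + 1) v (· > ·)
  simpa only [IsValDescent, pval_eq_getD, length_oneLine] using this

end OneLine

section Counting

variable {n i : ℕ}

theorem nextOr_pair_mem_of_ascent_descent (hin : i + 1 ≤ n) {W : List ℕ}
    (hW : W ∈ (Icc 1 n).orderings) (hb : i < W.nextOr i (n + 1))
    (hd : W.nextOr (i + 1) (n + 1) < i + 1) :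
    (W.nextOr i (n + 1), W.nextOr (i + 1) (n + 1)) ∈
      (Ioc i (n + 1) ×ˢ Icc 1 i).erase (i + 1, i) := by
  obtain ⟨hW, hmem⟩ := mem_orderings.1 hW
  have hbound : ∀ a, a ∈ W ∨ a = n + 1 → 1 ≤ a ∧ a ≤ n + 1 := by
    rintro a (ha | rfl)
    · have := (hmem a).1 ha
      rw [mem_Icc] at this
      omega
    · omega
  have hb' := hbound _ (W.nextOr_mem_or_eq i (n + 1))
  have hd' := hbound _ (W.nextOr_mem_or_eq (i + 1) (n + 1))
  simp only [mem_erase, mem_product, mem_Ioc, mem_Icc, ne_eq, Prod.mk.injEq, not_and]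
  refine ⟨fun hb₁ hd₁ => ?_, ⟨hb, hb'.2⟩, hd'.1, by omega⟩
  rw [← hb₁] at hd₁
  exact hW.nextOr_nextOr_ne (by omega) (by omega) hd₁

theorem card_filter_orderings_Icc_nextOr_eq (hi : 1 ≤ i) (hin : i + 1 ≤ n) {b d : ℕ}
    (hib : i < b) (hb : b ≤ n + 1) (hd : 1 ≤ d) (hdi : d ≤ i) (hne : (b, d) ≠ (i + 1, i)) :
    #{W ∈ (Icc 1 n).orderings | W.nextOr i (n + 1) = b ∧ W.nextOr (i + 1) (n + 1) = d}
      = (n - 2)! := by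
  have hz : n + 1 ∉ Icc 1 n := by simp
  have hb' : b ∈ insert (n + 1) (Icc 1 n) := by rw [mem_insert, mem_Icc]; omega
  have hd' : d ∈ insert (n + 1) (Icc 1 n) := by rw [mem_insert, mem_Icc]; omega
  have hi' : i ∈ Icc 1 n := mem_Icc.2 ⟨hi, by omega⟩
  have hi1' : i + 1 ∈ Icc 1 n := mem_Icc.2 ⟨by omega, hin⟩
  rw [show n - 2 = #(Icc 1 n) - 2 by simp]
  rcases eq_or_ne d i with rfl | hdi'
  · simp_rw [and_comm (a := _ = b)]
    exact card_filter_orderings_nextOr_eq_and_nextOr_eq hz hi1' hi' hd' hb' (by omega)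
      (by omega) (by omega) (by omega) (fun h => hne (by rw [h]))
  · exact card_filter_orderings_nextOr_eq_and_nextOr_eq hz hi' hi1' hb' hd' (by omega)
      (by omega) (by omega) (by omega) hdi'

theorem card_filter_orderings_Icc_ascent_descent (hi : 1 ≤ i) (hin : i + 1 ≤ n) :
    #{W ∈ (Icc 1 n).orderings | i < W.nextOr i (n + 1) ∧ W.nextOr (i + 1) (n + 1) < i + 1}
      = ((n + 1 - i) * i - 1) * (n - 2)! := by
  have hpairs : #((Ioc i (n + 1) ×ˢ Icc 1 i).erase (i + 1, i)) = (n + 1 - i) * i - 1 := by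
    rw [card_erase_of_mem
        (mk_mem_product (mem_Ioc.2 ⟨by omega, by omega⟩) (mem_Icc.2 ⟨hi, le_rfl⟩)),
      card_product, Nat.card_Ioc, Nat.card_Icc, Nat.add_sub_cancel]
  rw [card_eq_sum_card_fiberwise (t := (Ioc i (n + 1) ×ˢ Icc 1 i).erase (i + 1, i))
      fun W hW => nextOr_pair_mem_of_ascent_descent hin (mem_filter.1 hW).1
        (mem_filter.1 hW).2.1 (mem_filter.1 hW).2.2]
  rw [sum_congr rfl fun p hp => ?_, sum_const, smul_eq_mul, hpairs]
  obtain ⟨b, d⟩ := p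
  simp only [mem_erase, mem_product, mem_Ioc, mem_Icc] at hp
  obtain ⟨hne, ⟨hib, hb⟩, hd, hdi⟩ := hp
  rw [filter_filter, ← card_filter_orderings_Icc_nextOr_eq hi hin hib hb hd hdi hne]
  refine congrArg card (filter_congr fun W _ => ?_)
  simp only [Prod.mk.injEq]
  constructor
  · exact fun h => h.2
  · rintro ⟨rfl, rfl⟩
    exact ⟨⟨hib, by omega⟩, rfl, rfl⟩

end Counting

open scoped Classical in
theorem stmt0_general (n i : ℕ) (hi1 : 1 ≤ i) (hi2 : i ≤ n - 1) :
    (Finset.univ.filter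
      (fun π : Equiv.Perm (Fin n) => IsValAscent n π i ∧ IsValDescent n π (i + 1))).card
    = (i - 1) * (n - 2).factorial + (n - i) * (n - 2).factorial
      + (n - i) * (i - 1) * (n - 2).factorial := by
  have hin : i + 1 ≤ n := by omega
  have hwords : #{π : Equiv.Perm (Fin n) | IsValAscent n π i ∧ IsValDescent n π (i + 1)}
      = #{W ∈ (Icc 1 n).orderings | i < W.nextOr i (n + 1) ∧ W.nextOr (i + 1) (n + 1) < i + 1} := by
    rw [← card_filter_oneLine]
    refine congrArg card (filter_congr fun π _ => ?_)
    have hmem := (mem_orderings.1 (oneLine_mem_orderings π)).2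
    rw [isValAscent_iff, isValDescent_iff, hmem, hmem]
    simp [hi1, hin, show i ≤ n by omega]
  have hpairs : (n + 1 - i) * i - 1 = (i - 1) + (n - i) + (n - i) * (i - 1) := by
    obtain ⟨j, rfl⟩ : ∃ j, i = j + 1 := ⟨i - 1, by omega⟩
    obtain ⟨k, rfl⟩ : ∃ k, n = j + 1 + k := ⟨n - (j + 1), by omega⟩
    rw [show j + 1 + k + 1 - (j + 1) = k + 1 by omega, Nat.add_sub_cancel, Nat.add_sub_cancel_left,
      show (k + 1) * (j + 1) = j + k + k * j + 1 by ring, Nat.add_sub_cancel]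
  rw [hwords, card_filter_orderings_Icc_ascent_descent hi1 hin, hpairs]
  ring

open scoped Classical in
theorem stmt0 (n i : ℕ) (hn : 2 ≤ n) (hi1 : 1 ≤ i) (hi2 : i ≤ n - 1) :
    (Finset.univ.filter
      (fun π : Equiv.Perm (Fin n) => IsValAscent n π i ∧ IsValDescent n π (i + 1))).card
    = (i - 1) * (n - 2).factorial + (n - i) * (n - 2).factorial
      + (n - i) * (i - 1) * (n - 2).factorial :=
  stmt0_general n i hi1 hi2
end

section
/- For n ≥ 2, the identity ∑_{i=1}^{n-1} 2^{n-2}·[(n-1)!·(1 + (n-i)) + (n-2)!·((i-1) + (n-i) + (n-i)(i-1))] = 2^{n-1}·(n-1)!·(4n² + 7n - 12)/12 holds. -/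
open Finset

lemma sq6 (m : ℕ) : 6 * ∑ k ∈ Finset.range (m + 1), (k : ℤ) ^ 2
    = m * (m + 1) * (2 * m + 1) := by
  induction m with
  | zero => simp
  | succ m ih =>
    rw [Finset.sum_range_succ]
    push_cast
    linear_combination ih

theorem stmt7 (n : ℕ) (hn : 2 ≤ n) :
    12 * ∑ i ∈ Finset.Icc 1 (n - 1),
        2 ^ (n - 2) * ((n - 1).factorial * (1 + (n - i))
          + (n - 2).factorial * ((i - 1) + (n - i) + (n - i) * (i - 1)))
    = 2 ^ (n - 1) * (n - 1).factorial * (4 * n ^ 2 + 7 * n - 12) := by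
  obtain ⟨m, rfl⟩ : ∃ m, n = m + 2 := ⟨n - 2, by omega⟩
  have h1 : m + 2 - 1 = m + 1 := rfl
  have h2 : m + 2 - 2 = m := rfl
  have hr : 4 * (m + 2) ^ 2 + 7 * (m + 2) - 12 = 4 * m ^ 2 + 23 * m + 18 := by
    have : 4 * (m + 2) ^ 2 = 4 * m ^ 2 + 16 * m + 16 := by ring
    omega
  rw [h1, h2, hr]
  apply Nat.cast_injective (R := ℤ)
  push_cast
  have hsum : ∑ i ∈ Finset.Icc 1 (m + 1),
      ((2:ℤ) ^ m * ((m + 1).factorial * (1 + ((m + 2 - i : ℕ) : ℤ))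
        + (m.factorial : ℤ) * (((i - 1 : ℕ) : ℤ) + ((m + 2 - i : ℕ) : ℤ)
          + ((m + 2 - i : ℕ) : ℤ) * ((i - 1 : ℕ) : ℤ))))
      = ∑ k ∈ Finset.range (m + 1),
        ((m + 1) * (2 ^ m * (m.factorial : ℤ) * ((m : ℤ) + 3))
          - 2 ^ m * (m.factorial : ℤ) * (k : ℤ) ^ 2) := by
    rw [← Finset.Ico_add_one_right_eq_Icc, Finset.sum_Ico_eq_sum_range]
    apply Finset.sum_congr (by norm_num)
    intro k hk
    simp only [Finset.mem_range] at hk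
    have e1 : m + 2 - (1 + k) = m + 1 - k := by omega
    have e2 : 1 + k - 1 = k := by omega
    have e3 : ((m + 1 - k : ℕ) : ℤ) = (m : ℤ) + 1 - k := by
      have : k ≤ m + 1 := by omega
      push_cast [this]; ring
    rw [e1, e2, e3]
    have hfac : ((m + 1).factorial : ℤ) = ((m : ℤ) + 1) * (m.factorial : ℤ) := by
      rw [Nat.factorial_succ]; push_cast; ring
    rw [hfac]
    ring
  rw [hsum, Finset.sum_sub_distrib, Finset.sum_const, Finset.card_range,
    ← Finset.mul_sum]
  have hfac : ((m + 1).factorial : ℤ) = ((m : ℤ) + 1) * (m.factorial : ℤ) := by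
    rw [Nat.factorial_succ]; push_cast; ring
  rw [hfac]
  have hS := sq6 m
  set S := ∑ k ∈ Finset.range (m + 1), (k : ℤ) ^ 2 with hSdef
  linear_combination (-(2 * 2 ^ m * (m.factorial : ℤ))) * hS
end

section
/- For n ≥ 2, the number of ascending runs of length exactly 1 in all permutations of [n] equals n!·(n+4)/6. -/
/-!
Summing over positions, one counts for each `i` the permutations having a run of size 1 at `i`.
Right multiplication by permutations of a set of `k` positions shows that the `k!` relative
orders of the entries at those positions are equally frequent. At `i = 1` and `i = n` the
boundary values `σ₀ = n+1`, `σ_{n+1} = 0` make one inequality automatic, so `n!/2`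
permutations qualify; at each of the `n - 2` interior positions `σ_{i-1} > σ_i > σ_{i+1}` is one
of `3!` orders, so `n!/6` do. Hence the total is `2 · n!/2 + (n - 2) · n!/6 = n! (n + 4)/6`.
-/

open Finset

/-- The word `σ₁ … σₙ` of a permutation of `[n]` (positions `1,…,n`), with the
boundary conventions `σ₀ = n+1` and `σ_{n+1} = 0`. -/
def rval (n : ℕ) (σ : Equiv.Perm (Fin n)) (t : ℕ) : ℕ :=
  if t = 0 then n + 1
  else if h : t - 1 < n then (σ ⟨t - 1, h⟩ : ℕ) + 1
  else 0

open Equiv Nat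

theorem Tuple.sort_eq_of_strictMono_comp {k : ℕ} {α : Type*} [LinearOrder α] {f : Fin k → α}
    {ρ : Perm (Fin k)} (h : StrictMono (f ∘ ρ)) : Tuple.sort f = ρ :=
  (Tuple.eq_sort_iff.2 ⟨h.monotone, fun _ _ hij hf => absurd hf (h hij).ne⟩).symm

theorem Equiv.Perm.mul_viaEmbeddingHom_comp {α β : Type*} (g : α ↪ β) (σ : Perm β)
    (τ : Perm α) : ⇑(σ * viaEmbeddingHom g τ) ∘ g = σ ∘ g ∘ τ := by
  ext x
  simp [viaEmbeddingHom_apply, viaEmbedding_apply]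

section RelativeOrder

variable {α : Type*} [LinearOrder α] {k : ℕ}

noncomputable def permEquivStrictMonoCompProd (g : Fin k ↪ α) :
    Perm α ≃ {σ : Perm α // StrictMono (σ ∘ g)} × Perm (Fin k) where
  toFun π :=
    (⟨π * Perm.viaEmbeddingHom g (Tuple.sort (π ∘ g)), by
      rw [Perm.mul_viaEmbeddingHom_comp]
      exact (Tuple.monotone_sort (π ∘ g)).strictMono_of_injective
        (π.injective.comp (g.injective.comp (Tuple.sort _).injective))⟩,
      (Tuple.sort (π ∘ g))⁻¹)
  invFun p := p.1.1 * Perm.viaEmbeddingHom g p.2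
  left_inv π := by simp
  right_inv := by
    rintro ⟨⟨σ, hσ⟩, τ⟩
    have hsort : Tuple.sort ((σ * Perm.viaEmbeddingHom g τ) ∘ g) = τ⁻¹ := by
      rw [Perm.mul_viaEmbeddingHom_comp]
      exact Tuple.sort_eq_of_strictMono_comp (by simpa [Function.comp_def] using hσ)
    simp only [hsort, inv_inv, map_inv, mul_inv_cancel_right]

variable [Fintype α]

theorem card_filter_strictMono_comp_mul_factorial (g : Fin k ↪ α) :
    #{σ : Perm α | StrictMono (σ ∘ g)} * k ! = (Fintype.card α)! := by
  have := Fintype.card_congr (permEquivStrictMonoCompProd g)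
  rw [Fintype.card_prod, Fintype.card_subtype, Fintype.card_perm, Fintype.card_perm,
    Fintype.card_fin] at this
  convert this.symm

theorem card_filter_lt_mul_two {a b : α} (hab : a ≠ b) :
    #{σ : Perm α | σ a < σ b} * 2 = (Fintype.card α)! := by
  have hg : Function.Injective ![a, b] := by
    simp [Fin.forall_fin_two, Function.Injective, hab, hab.symm]
  rw [← card_filter_strictMono_comp_mul_factorial ⟨_, hg⟩]
  congr 2
  ext σ
  simp [Fin.strictMono_iff_lt_succ]

theorem card_filter_lt_lt_mul_six {a b c : α} (hab : a ≠ b) (hac : a ≠ c) (hbc : b ≠ c) :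
    #{σ : Perm α | σ a < σ b ∧ σ b < σ c} * 6 = (Fintype.card α)! := by
  have hg : Function.Injective ![a, b, c] := by
    simp [Fin.forall_fin_succ, Function.Injective, hab, hac, hbc, hab.symm, hac.symm, hbc.symm]
  rw [← card_filter_strictMono_comp_mul_factorial ⟨_, hg⟩]
  congr 2
  ext σ
  simp [Fin.strictMono_iff_lt_succ, Fin.forall_fin_two]

end RelativeOrder

section SingletonRuns

variable {n : ℕ}

def IsSingletonRunAt (n : ℕ) (σ : Perm (Fin n)) (i : ℕ) : Prop :=
  rval n σ (i - 1) > rval n σ i ∧ rval n σ i > rval n σ (i + 1)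

instance (σ : Perm (Fin n)) : DecidablePred (IsSingletonRunAt n σ) :=
  fun _ => inferInstanceAs (Decidable (_ ∧ _))

theorem rval_zero (σ : Perm (Fin n)) : rval n σ 0 = n + 1 := rfl

theorem rval_of_ne_zero (σ : Perm (Fin n)) {t : ℕ} (h0 : t ≠ 0) (h : t - 1 < n) :
    rval n σ t = σ ⟨t - 1, h⟩ + 1 := by
  simp [rval, h0, h]

theorem rval_add_one_self (σ : Perm (Fin n)) : rval n σ (n + 1) = 0 := by
  simp [rval]

theorem card_isSingletonRunAt_one_mul_two (hn : 2 ≤ n) :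
    #{σ : Perm (Fin n) | IsSingletonRunAt n σ 1} * 2 = n ! := by
  have h := card_filter_lt_mul_two (α := Fin n) (a := ⟨1, by omega⟩) (b := ⟨0, by omega⟩)
    (by simp)
  rw [Fintype.card_fin] at h
  rw [← h]
  congr 2
  ext σ
  simp [IsSingletonRunAt, rval_zero, rval_of_ne_zero σ one_ne_zero (by omega : 1 - 1 < n),
    rval_of_ne_zero σ two_ne_zero (by omega : 2 - 1 < n), (σ _).isLt]

theorem card_isSingletonRunAt_self_mul_two (hn : 2 ≤ n) :
    #{σ : Perm (Fin n) | IsSingletonRunAt n σ n} * 2 = n ! := by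
  have h := card_filter_lt_mul_two (α := Fin n) (a := ⟨n - 1, by omega⟩)
    (b := ⟨n - 1 - 1, by omega⟩) (by simp; omega)
  rw [Fintype.card_fin] at h
  rw [← h]
  congr 2
  ext σ
  simp [IsSingletonRunAt, rval_add_one_self,
    rval_of_ne_zero σ (by omega : n ≠ 0) (by omega : n - 1 < n),
    rval_of_ne_zero σ (by omega : n - 1 ≠ 0) (by omega : n - 1 - 1 < n)]

theorem card_isSingletonRunAt_mul_six {i : ℕ} (h1 : 1 < i) (hi : i < n) :
    #{σ : Perm (Fin n) | IsSingletonRunAt n σ i} * 6 = n ! := by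
  have h := card_filter_lt_lt_mul_six (α := Fin n) (a := ⟨i, hi⟩) (b := ⟨i - 1, by omega⟩)
    (c := ⟨i - 1 - 1, by omega⟩) (by simp; omega) (by simp; omega) (by simp; omega)
  rw [Fintype.card_fin] at h
  rw [← h]
  congr 2
  ext σ
  simp [IsSingletonRunAt, rval_of_ne_zero σ (by omega : i ≠ 0) (by omega : i - 1 < n),
    rval_of_ne_zero σ (by omega : i - 1 ≠ 0) (by omega : i - 1 - 1 < n),
    rval_of_ne_zero σ (by omega : i + 1 ≠ 0) (by omega : i + 1 - 1 < n)]
  exact and_comm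

end SingletonRuns

open scoped Classical in
theorem stmt10 (n : ℕ) (hn : 2 ≤ n) :
    6 * ∑ σ : Equiv.Perm (Fin n),
        ((Finset.Icc 1 n).filter
          (fun i => rval n σ (i - 1) > rval n σ i ∧ rval n σ i > rval n σ (i + 1))).card
    = n.factorial * (n + 4) := by
  change 6 * ∑ σ : Perm (Fin n), #{i ∈ Icc 1 n | IsSingletonRunAt n σ i} = _
  have hswap : ∑ σ : Perm (Fin n), #{i ∈ Icc 1 n | IsSingletonRunAt n σ i}
      = ∑ i ∈ Icc 1 n, #{σ : Perm (Fin n) | IsSingletonRunAt n σ i} :=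
    sum_card_bipartiteAbove_eq_sum_card_bipartiteBelow _
  have hIcc : Icc 1 n = insert 1 (insert n (Ioo 1 n)) := by
    ext i
    simp only [mem_Icc, mem_insert, mem_Ioo]
    omega
  have hinterior :
      ∑ i ∈ Ioo 1 n, 6 * #{σ : Perm (Fin n) | IsSingletonRunAt n σ i} = (n - 1 - 1) * n ! := by
    rw [sum_congr rfl fun i hi => ?_, sum_const, Nat.card_Ioo, smul_eq_mul]
    rw [mem_Ioo] at hi
    rw [mul_comm, card_isSingletonRunAt_mul_six hi.1 hi.2]
  have hfirst := card_isSingletonRunAt_one_mul_two hn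
  have hlast := card_isSingletonRunAt_self_mul_two hn
  rw [hswap, hIcc, sum_insert (by simp; omega), sum_insert (by simp), mul_add, mul_add, mul_sum,
    hinterior]
  obtain ⟨m, rfl⟩ := Nat.exists_eq_add_of_le hn
  rw [show 2 + m - 1 - 1 = m by omega]
  linarith
end

section
/- The polynomials A_{a,b}(n,k) defined by the recurrence A_{a,b}(n+1,k) = (a−1+k)·A_{a,b}(n,k) + (b+n+1−k)·A_{a,b}(n,k−1) with A_{a,b}(1,1) = 1 (and 0 otherwise) satisfy: the polynomial A_n(t) = ∑_k A_{a,b}(n,k) t^k has A_n(1) = (a+b)(a+b+1)···(a+b+n−2) for n ≥ 2. -/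
open Finset

theorem stmt17 (a b : ℚ) (A : ℕ → ℕ → ℚ)
    (hbase1 : A 1 1 = 1)
    (hbase0 : ∀ k, k ≠ 1 → A 1 k = 0)
    (hzero : ∀ n, A n 0 = 0)
    (hrec : ∀ n, 1 ≤ n → ∀ k, 1 ≤ k →
      A (n + 1) k = (a - 1 + k) * A n k + (b + n + 1 - k) * A n (k - 1)) :
    ∀ n, 2 ≤ n → ∑ k ∈ Finset.range (n + 1), A n k
      = ∏ j ∈ Finset.range (n - 1), (a + b + j) := by
  -- vanishing above the diagonal
  have hvan : ∀ n, 1 ≤ n → ∀ k, n < k → A n k = 0 := by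
    intro n
    induction n with
    | zero => omega
    | succ m ih =>
      intro _ k hk
      rcases Nat.eq_zero_or_pos m with hm | hm
      · subst hm
        exact hbase0 k (by omega)
      · rw [hrec m hm k (by omega), ih hm k (by omega), ih hm (k - 1) (by omega)]
        ring
  intro n hn
  induction n, hn using Nat.le_induction with
  | base =>
    have h1 : A 2 1 = (a - 1 + 1) * A 1 1 + (b + 1 + 1 - 1) * A 1 0 :=
      hrec 1 le_rfl 1 le_rfl
    have h2 : A 2 2 = (a - 1 + 2) * A 1 2 + (b + 1 + 1 - 2) * A 1 1 :=
      hrec 1 le_rfl 2 (by omega)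
    rw [show (2:ℕ) + 1 = 3 from rfl]
    rw [Finset.sum_range_succ, Finset.sum_range_succ, Finset.sum_range_one]
    rw [hzero, h1, h2, hbase1, hzero, hbase0 2 (by omega)]
    norm_num
    ring
  | succ n hn ih =>
    have hn1 : 1 ≤ n := by omega
    have hrec' : ∀ k, A (n + 1) k
        = (a - 1 + k) * A n k + (b + (n : ℚ) + 1 - k) * A n (k - 1) := by
      intro k
      rcases k with _ | k
      · simp [hzero]
      · exact hrec n hn1 (k + 1) (by omega)
    have hsum : ∑ k ∈ Finset.range (n + 1 + 1), A (n + 1) k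
        = ∑ k ∈ Finset.range (n + 1 + 1),
            ((a - 1 + k) * A n k + (b + (n : ℚ) + 1 - k) * A n (k - 1)) :=
      Finset.sum_congr rfl fun k _ => hrec' k
    rw [hsum, Finset.sum_add_distrib]
    have e1 : ∑ k ∈ Finset.range (n + 1 + 1), (a - 1 + (k : ℚ)) * A n k
        = ∑ k ∈ Finset.range (n + 1), (a - 1 + (k : ℚ)) * A n k := by
      rw [Finset.sum_range_succ, hvan n hn1 (n + 1) (by omega), mul_zero, add_zero]
    have e2 : ∑ k ∈ Finset.range (n + 1 + 1), (b + (n : ℚ) + 1 - k) * A n (k - 1)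
        = ∑ k ∈ Finset.range (n + 1), (b + (n : ℚ) - k) * A n k := by
      rw [Finset.sum_range_succ']
      simp only [Nat.add_sub_cancel, Nat.cast_zero, Nat.zero_sub, hzero, mul_zero, add_zero,
        Nat.sub_zero]
      apply Finset.sum_congr rfl
      intro k _
      push_cast
      ring_nf
    rw [e1, e2, ← Finset.sum_add_distrib]
    have e3 : ∑ k ∈ Finset.range (n + 1),
        ((a - 1 + (k : ℚ)) * A n k + (b + (n : ℚ) - k) * A n k)
        = (a + b + ((n : ℚ) - 1)) * ∑ k ∈ Finset.range (n + 1), A n k := by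
      rw [Finset.mul_sum]
      apply Finset.sum_congr rfl
      intro k _
      ring
    rw [e3, ih]
    have hne : n + 1 - 1 = (n - 1) + 1 := by omega
    rw [hne, Finset.prod_range_succ]
    have : ((n - 1 : ℕ) : ℚ) = (n : ℚ) - 1 := by
      push_cast [Nat.cast_sub hn1]
      ring
    rw [this]
    ring
end

section
/- For n ≥ 2, the polynomial A_n(t) = ∑_k A_{a,b}(n,k) t^k defined by the recurrence A_n(t) = (a−1)A_{n−1}(t) + (b+n−1)t·A_{n−1}(t) + t(1−t)A'_{n−1}(t) with A_1(t) = t satisfies A'_n(1) = (a + bn + C(n,2) − 1)·(a+b)(a+b+1)···(a+b+n−3). -/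
open Finset Polynomial

theorem stmt18 (a b : ℚ) (A : ℕ → Polynomial ℚ)
    (h1 : A 1 = Polynomial.X)
    (hrec : ∀ n, 2 ≤ n →
      A n = Polynomial.C (a - 1) * A (n - 1)
        + Polynomial.C (b + n - 1) * Polynomial.X * A (n - 1)
        + Polynomial.X * (1 - Polynomial.X) * Polynomial.derivative (A (n - 1))) :
    ∀ n, 2 ≤ n → (Polynomial.derivative (A n)).eval 1
      = (a + b * n + (n : ℚ) * ((n : ℚ) - 1) / 2 - 1)
        * ∏ k ∈ Finset.range (n - 2), (a + b + k) := by
  have hval : ∀ m : ℕ, (A (m + 1)).eval 1 = ∏ k ∈ Finset.range m, (a + b + k) := by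
    intro m
    induction m with
    | zero => simp [h1]
    | succ m ih =>
      have h := hrec (m + 2) (by omega)
      have hm : m + 2 - 1 = m + 1 := by omega
      rw [hm] at h
      rw [h]
      simp only [eval_add, eval_mul, eval_C, eval_X, eval_sub, eval_one, ih,
        Finset.prod_range_succ]
      push_cast
      ring
  have hder : ∀ m : ℕ, (Polynomial.derivative (A (m + 2))).eval 1
      = (a + b * (m + 2 : ℕ) + ((m + 2 : ℕ) : ℚ) * (((m + 2 : ℕ) : ℚ) - 1) / 2 - 1)
        * ∏ k ∈ Finset.range m, (a + b + k) := by
    intro m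
    induction m with
    | zero =>
      have h := hrec 2 (by omega)
      norm_num at h
      rw [h, h1]
      simp only [derivative_add, derivative_mul, derivative_C, derivative_X,
        derivative_one, derivative_sub, eval_add, eval_mul, eval_C, eval_X,
        eval_sub, eval_one, eval_zero]
      push_cast
      ring
    | succ m ih =>
      have h := hrec (m + 3) (by omega)
      have hm : m + 3 - 1 = m + 2 := by omega
      rw [hm] at h
      rw [h]
      simp only [derivative_add, derivative_mul, derivative_C, derivative_X,
        derivative_one, derivative_sub, eval_add, eval_mul, eval_C, eval_X,
        eval_sub, eval_one, eval_zero]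
      have hv := hval (m + 1)
      rw [hv, ih, Finset.prod_range_succ]
      push_cast
      ring
  intro n hn
  obtain ⟨m, rfl⟩ : ∃ m, n = m + 2 := ⟨n - 2, by omega⟩
  have hm : m + 2 - 2 = m := by omega
  rw [hm]
  exact hder m
end
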